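/- Assume that for ℓ ∈ {1,2} the measurable kernel γ_ℓ : Ω×Ω → [0,∞) satisfies condition (N) with a common constant γ∞ ≥ 1, let (u⁰,v⁰) ∈ X⁺ × X⁺, and suppose that for some δ ≥ 0 one has ‖u⁰‖∞ ≤ 1 + δ and ‖v⁰‖∞ < (f+κ)/(1+δ). Then the global solution (u,v) of (CNLGS) satisfies ‖u(t)‖∞ ≤ 1 + δ and ‖v(t)‖∞ ≤ ‖v⁰‖∞ for all t ≥ 0, and lim_{t→∞} ( ‖u(t) − 1‖∞ + ‖v(t)‖∞ ) = 0. -/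

import Mathlib

/-!
Everything rests on a weak maximum principle for `Γ_γ`: if `w` is a subsolution of
`∂ₜw = d Γ_γ w + K w` on `{w > 0}`, is bounded above on `[0, T]` and `w(0) ≤ 0`, then `w ≤ 0` on
`[0, T]`. Where `w ≥ 0`, `Γ_γ w ≤ γ∞ ess sup w`; hence if `e^{-ρt} w ≤ M` with
`ρ = K + 2 d γ∞ + 1`, a fence argument at each point gives `e^{-ρt} w ≤ M / 2`, and iterating
gives `w ≤ 0`. The bound on `[0, T]` needed to start comes from `∂ₜw ≥ -C w`, which bounds `w(t)`
by `e^{CT} w(T)`.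

With `c = min (f + κ - (1 + δ) ‖v⁰‖∞) (f / 2) > 0`, the principle applied successively to
`u - 1 - δ e^{-ct}`, `v - ‖v⁰‖∞ e^{-ct}` and `1 - M e^{-ct} - u` traps `(u, v)` in an envelope
that shrinks exponentially to `(1, 0)`.
-/

open MeasureTheory Real Set Filter

noncomputable section

/-- The nonlocal operator `Γ_γ z(x) = ∫_Ω γ(x,y)(z(y) - z(x)) dy`. -/
def GammaOp {n : ℕ} (Ω : Set (EuclideanSpace ℝ (Fin n)))
    (γ : EuclideanSpace ℝ (Fin n) → EuclideanSpace ℝ (Fin n) → ℝ)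
    (z : EuclideanSpace ℝ (Fin n) → ℝ) (x : EuclideanSpace ℝ (Fin n)) : ℝ :=
  ∫ y in Ω, γ x y * (z y - z x)

/-- Condition (N): γ is a measurable nonnegative kernel with
`∫_Ω γ(y,x) dy = ∫_Ω γ(x,y) dy ≤ γ∞` for all `x ∈ Ω`. -/
def KernelCondN {n : ℕ} (Ω : Set (EuclideanSpace ℝ (Fin n)))
    (γ : EuclideanSpace ℝ (Fin n) → EuclideanSpace ℝ (Fin n) → ℝ) (γinf : ℝ) : Prop :=
  Measurable (Function.uncurry γ) ∧ (∀ x y, 0 ≤ γ x y) ∧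
    ∀ x ∈ Ω, IntegrableOn (fun y => γ x y) Ω ∧ IntegrableOn (fun y => γ y x) Ω ∧
      (∫ y in Ω, γ y x) = (∫ y in Ω, γ x y) ∧ (∫ y in Ω, γ x y) ≤ γinf

/-- The `L∞(Ω)` norm. -/
def supN {n : ℕ} (Ω : Set (EuclideanSpace ℝ (Fin n)))
    (z : EuclideanSpace ℝ (Fin n) → ℝ) : ℝ :=
  (eLpNormEssSup z (volume.restrict Ω)).toReal

/-- `(u,v)` is a (C¹ in time, L∞ in space) solution of the nonlocal Gray-Scott system
(CNLGS) with kernels `γ₁, γ₂` and initial data `(u0, v0)`. -/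
def IsGSSol {n : ℕ} (Ω : Set (EuclideanSpace ℝ (Fin n))) (d₁ d₂ f κ : ℝ)
    (γ₁ γ₂ : EuclideanSpace ℝ (Fin n) → EuclideanSpace ℝ (Fin n) → ℝ)
    (u0 v0 : EuclideanSpace ℝ (Fin n) → ℝ)
    (u v : ℝ → EuclideanSpace ℝ (Fin n) → ℝ) : Prop :=
  (∀ t, 0 ≤ t → MemLp (u t) ⊤ (volume.restrict Ω) ∧ MemLp (v t) ⊤ (volume.restrict Ω)) ∧
  (∀ x ∈ Ω, u 0 x = u0 x ∧ v 0 x = v0 x) ∧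
  (∀ x ∈ Ω, ∀ t, 0 ≤ t →
    HasDerivWithinAt (fun s => u s x)
      (d₁ * GammaOp Ω γ₁ (u t) x - u t x * (v t x) ^ 2 + f * (1 - u t x)) (Ici 0) t ∧
    HasDerivWithinAt (fun s => v s x)
      (d₂ * GammaOp Ω γ₂ (v t) x + u t x * (v t x) ^ 2 - (f + κ) * v t x) (Ici 0) t)

/-- A time-dependent function is nonnegative a.e. in `Ω` at each time `t ≥ 0`. -/
def NonnegSol {n : ℕ} (Ω : Set (EuclideanSpace ℝ (Fin n)))
    (w : ℝ → EuclideanSpace ℝ (Fin n) → ℝ) : Prop :=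
  ∀ t, 0 ≤ t → ∀ᵐ x ∂(volume.restrict Ω), 0 ≤ w t x

lemma hasDerivAt_exp_neg_mul (c t : ℝ) :
    HasDerivAt (fun s => exp (-(c * s))) (-c * exp (-(c * t))) t := by
  simpa [mul_comm] using ((hasDerivAt_id t).const_mul c).neg.exp

lemma le_exp_mul_of_deriv_right_ge {g g' : ℝ → ℝ} {a b C : ℝ} (hab : a ≤ b)
    (hg : ContinuousOn g (Icc a b)) (hg' : ∀ r ∈ Ico a b, HasDerivWithinAt g (g' r) (Ici r) r)
    (hbound : ∀ r ∈ Ico a b, -(C * g r) ≤ g' r) : g a ≤ exp (C * (b - a)) * g b := by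
  have hexp : ∀ r, HasDerivAt (fun s => exp (C * (s - a))) (exp (C * (r - a)) * C) r := fun r => by
    simpa using ((hasDerivAt_id r).sub_const a |>.const_mul C).exp
  have := image_le_of_deriv_right_le_deriv_boundary (a := a) (b := b)
    (f := fun r => -(exp (C * (r - a)) * g r)) (B := fun _ => -g a) (B' := fun _ => 0)
    (f' := fun r => -(exp (C * (r - a)) * (C * g r + g' r)))
    ((Continuous.continuousOn (by fun_prop)).mul hg).neg
    (fun r hr => (((hexp r).hasDerivWithinAt.mul (hg' r hr)).neg).congr_deriv (by ring))
    (by simp) continuousOn_const (fun r _ => hasDerivWithinAt_const _ _ _)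
    (fun r hr => by
      have := mul_nonneg (exp_pos (C * (r - a))).le (neg_le_iff_add_nonneg.1 (hbound r hr))
      linarith) (right_mem_Icc.2 hab)
  linarith

section Measure

variable {α : Type*} [MeasurableSpace α] {μ : Measure α}

lemma ae_forall_of_forall_Icc {P : ℝ → α → Prop}
    (h : ∀ T, 0 ≤ T → ∀ᵐ x ∂μ, ∀ t ∈ Icc 0 T, P t x) : ∀ᵐ x ∂μ, ∀ t, 0 ≤ t → P t x := by
  filter_upwards [ae_all_iff.2 fun N : ℕ => h N N.cast_nonneg] with x hx t ht
  obtain ⟨N, hN⟩ := exists_nat_ge t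
  exact hx N t ⟨ht, hN⟩

lemma ae_forall_nonneg_of_continuousOn {w : ℝ → α → ℝ}
    (hcont : ∀ᵐ x ∂μ, ContinuousOn (fun t => w t x) (Ici 0))
    (hw : ∀ t, 0 ≤ t → ∀ᵐ x ∂μ, 0 ≤ w t x) : ∀ᵐ x ∂μ, ∀ t, 0 ≤ t → 0 ≤ w t x := by
  have hrat : ∀ᵐ x ∂μ, ∀ q : ℚ, 0 ≤ w (max (q : ℝ) 0) x :=
    ae_all_iff.2 fun q => hw _ (le_max_right _ _)
  filter_upwards [hcont, hrat] with x hx hxq t ht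
  have hφ : Continuous fun s : ℝ => w (max s 0) x :=
    hx.comp_continuous (continuous_id.max continuous_const) fun s => le_max_right s 0
  have := Rat.denseRange_cast.induction_on (p := fun s : ℝ => 0 ≤ w (max s 0) x) t
    (isClosed_le continuous_const hφ) hxq
  rwa [max_eq_left ht] at this

lemma exists_ae_le_of_deriv_right_ge {w w' : ℝ → α → ℝ} {C T W : ℝ}
    (hwT : ∀ᵐ x ∂μ, w T x ≤ W)
    (h : ∀ᵐ x ∂μ, ContinuousOn (fun t => w t x) (Icc 0 T) ∧ ∀ r ∈ Ico 0 T,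
      HasDerivWithinAt (fun t => w t x) (w' r x) (Ici r) r ∧ -(C * w r x) ≤ w' r x) :
    ∃ B, ∀ᵐ x ∂μ, ∀ t ∈ Icc 0 T, w t x ≤ B := by
  refine ⟨exp (|C| * T) * max W 0, ?_⟩
  filter_upwards [h, hwT] with x ⟨hcont, hder⟩ hxT t ht
  have hback := le_exp_mul_of_deriv_right_ge ht.2 (hcont.mono (Icc_subset_Icc ht.1 le_rfl))
    (fun r hr => (hder r ⟨ht.1.trans hr.1, hr.2⟩).1)
    (fun r hr => (hder r ⟨ht.1.trans hr.1, hr.2⟩).2)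
  have hexp : exp (C * (T - t)) ≤ exp (|C| * T) :=
    exp_le_exp.2 (by nlinarith [le_abs_self C, abs_nonneg C, ht.1, ht.2])
  calc w t x ≤ exp (C * (T - t)) * w T x := hback
    _ ≤ exp (C * (T - t)) * max W 0 := by gcongr; exact hxT.trans (le_max_left _ _)
    _ ≤ exp (|C| * T) * max W 0 := by gcongr

end Measure

section Kernel

variable {n : ℕ} {Ω : Set (EuclideanSpace ℝ (Fin n))}
  {γ : EuclideanSpace ℝ (Fin n) → EuclideanSpace ℝ (Fin n) → ℝ} {γinf : ℝ}
  {w : EuclideanSpace ℝ (Fin n) → ℝ} {x : EuclideanSpace ℝ (Fin n)}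

lemma supN_nonneg (w : EuclideanSpace ℝ (Fin n) → ℝ) : 0 ≤ supN Ω w :=
  ENNReal.toReal_nonneg

lemma supN_le_of_ae_abs_le {C : ℝ} (hC : 0 ≤ C) (h : ∀ᵐ x ∂(volume.restrict Ω), |w x| ≤ C) :
    supN Ω w ≤ C :=
  ENNReal.toReal_le_of_le_ofReal hC (eLpNormEssSup_le_of_ae_bound h)

lemma ae_abs_le_supN (hw : MemLp w ⊤ (volume.restrict Ω)) :
    ∀ᵐ x ∂(volume.restrict Ω), |w x| ≤ supN Ω w := by
  have hfin : eLpNormEssSup w (volume.restrict Ω) ≠ ⊤ := by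
    simpa [eLpNorm_exponent_top] using hw.2.ne
  filter_upwards [ae_le_eLpNormEssSup (f := w) (μ := volume.restrict Ω)] with x hx
  simpa [supN] using ENNReal.toReal_mono hfin hx

lemma tendsto_supN_of_ae_abs_le {z : ℝ → EuclideanSpace ℝ (Fin n) → ℝ} {g : ℝ → ℝ}
    (hg : Tendsto g atTop (nhds 0)) (hz : ∀ t, 0 ≤ t → ∀ᵐ x ∂(volume.restrict Ω), |z t x| ≤ g t)
    (hg0 : ∀ t, 0 ≤ t → 0 ≤ g t) : Tendsto (fun t => supN Ω (z t)) atTop (nhds 0) :=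
  squeeze_zero' (Eventually.of_forall fun t => supN_nonneg (z t))
    ((eventually_ge_atTop 0).mono fun t ht => supN_le_of_ae_abs_le (hg0 t ht) (hz t ht)) hg

lemma KernelCondN.bound_nonneg (hγ : KernelCondN Ω γ γinf) (hx : x ∈ Ω) : 0 ≤ γinf :=
  (integral_nonneg fun y => hγ.2.1 x y).trans (hγ.2.2 x hx).2.2.2

lemma gammaOp_le_of_ae_le (hγ : KernelCondN Ω γ γinf) (hx : x ∈ Ω) (hwx : 0 ≤ w x) {b : ℝ}
    (hb : 0 ≤ b) (hwb : ∀ᵐ y ∂(volume.restrict Ω), w y ≤ b) : GammaOp Ω γ w x ≤ γinf * b := by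
  obtain ⟨hγint, -, -, hγle⟩ := hγ.2.2 x hx
  by_cases hi : Integrable (fun y => γ x y * (w y - w x)) (volume.restrict Ω)
  · calc GammaOp Ω γ w x ≤ ∫ y in Ω, γ x y * b := by
          refine integral_mono_ae hi (hγint.mul_const b) ?_
          filter_upwards [hwb] with y hy
          exact mul_le_mul_of_nonneg_left (by linarith) (hγ.2.1 x y)
      _ = (∫ y in Ω, γ x y) * b := integral_mul_const _ _
      _ ≤ γinf * b := mul_le_mul_of_nonneg_right hγle hb
  · -- a non-integrable integrand makes `GammaOp` vanish
    rw [GammaOp, integral_undef hi]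
    exact mul_nonneg (hγ.bound_nonneg hx) hb

lemma neg_mul_le_gammaOp (hγ : KernelCondN Ω γ γinf) (hx : x ∈ Ω) (hwx : 0 ≤ w x)
    (hw : ∀ᵐ y ∂(volume.restrict Ω), 0 ≤ w y) : -(γinf * w x) ≤ GammaOp Ω γ w x := by
  obtain ⟨hγint, -, -, hγle⟩ := hγ.2.2 x hx
  by_cases hi : Integrable (fun y => γ x y * (w y - w x)) (volume.restrict Ω)
  · calc -(γinf * w x) ≤ -((∫ y in Ω, γ x y) * w x) :=
          neg_le_neg (mul_le_mul_of_nonneg_right hγle hwx)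
      _ = ∫ y in Ω, γ x y * (0 - w x) := by rw [← integral_mul_const, ← integral_neg]; simp
      _ ≤ GammaOp Ω γ w x := by
          refine integral_mono_ae ((hγint.mul_const (w x)).neg.congr ?_) hi ?_
          · exact Eventually.of_forall fun y => by simp
          filter_upwards [hw] with y hy
          exact mul_le_mul_of_nonneg_left (by linarith) (hγ.2.1 x y)
  · rw [GammaOp, integral_undef hi, neg_nonpos]
    exact mul_nonneg (hγ.bound_nonneg hx) hwx

lemma gammaOp_sub_const (c : ℝ) : GammaOp Ω γ (fun y => w y - c) x = GammaOp Ω γ w x := by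
  simp only [GammaOp, sub_sub_sub_cancel_right]

lemma gammaOp_const_sub (c : ℝ) : GammaOp Ω γ (fun y => c - w y) x = -GammaOp Ω γ w x := by
  simp only [GammaOp, ← integral_neg]
  congr 1 with y
  ring

end Kernel

section MaximumPrinciple

variable {n : ℕ}

/-- `w` is a subsolution of `∂ₜw = d Γ_γ w + K w` on `[0, T]` where it is positive, with
right time derivative `w'`. -/
def IsSubsolution (Ω : Set (EuclideanSpace ℝ (Fin n)))
    (γ : EuclideanSpace ℝ (Fin n) → EuclideanSpace ℝ (Fin n) → ℝ) (d K T : ℝ)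
    (w w' : ℝ → EuclideanSpace ℝ (Fin n) → ℝ) : Prop :=
  ∀ᵐ x ∂(volume.restrict Ω), x ∈ Ω ∧ ContinuousOn (fun t => w t x) (Icc 0 T) ∧
    ∀ r ∈ Ico 0 T, HasDerivWithinAt (fun t => w t x) (w' r x) (Ici r) r ∧
      (0 < w r x → w' r x ≤ d * GammaOp Ω γ (w r) x + K * w r x)

variable {Ω : Set (EuclideanSpace ℝ (Fin n))}
  {γ : EuclideanSpace ℝ (Fin n) → EuclideanSpace ℝ (Fin n) → ℝ} {γinf d K T : ℝ}
  {w w' : ℝ → EuclideanSpace ℝ (Fin n) → ℝ}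

/-- If `e^{-ρt} w ≤ M` then `Γ_γ w ≤ γ∞ e^{ρt} M` at points where `w ≥ 0`, so at a first time
where `e^{-ρt} w` reaches `M / 2` its derivative is at most `(d γ∞ + (K - ρ) / 2) M < 0`. -/
lemma IsSubsolution.ae_le_half (hw : IsSubsolution Ω γ d K T w w') (hγ : KernelCondN Ω γ γinf)
    (hd : 0 ≤ d) {ρ : ℝ} (hρ : K + 2 * (d * γinf) + 1 ≤ ρ)
    (h0 : ∀ᵐ x ∂(volume.restrict Ω), w 0 x ≤ 0) {M : ℝ} (hM : 0 < M)
    (hle : ∀ᵐ x ∂(volume.restrict Ω), ∀ t ∈ Icc 0 T, exp (-(ρ * t)) * w t x ≤ M) :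
    ∀ᵐ x ∂(volume.restrict Ω), ∀ t ∈ Icc 0 T, exp (-(ρ * t)) * w t x ≤ M / 2 := by
  have hwM : ∀ r ∈ Icc 0 T, ∀ᵐ y ∂(volume.restrict Ω), w r y ≤ exp (ρ * r) * M := fun r hr => by
    filter_upwards [hle] with y hy
    have := hy r hr
    rwa [exp_neg, ← div_eq_inv_mul, div_le_iff₀ (exp_pos _), mul_comm] at this
  filter_upwards [hw, h0] with x ⟨hx, hcont, hder⟩ hx0
  refine image_le_of_deriv_right_lt_deriv_boundary (B' := fun _ => 0)
    (f' := fun r => exp (-(ρ * r)) * (w' r x - ρ * w r x))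
    ((Continuous.continuousOn (by fun_prop)).mul hcont)
    (fun r hr => ((hasDerivAt_exp_neg_mul ρ r).hasDerivWithinAt.mul (hder r hr).1).congr_deriv
      (by ring))
    (by simpa using hx0.trans (half_pos hM).le)
    (fun _ => hasDerivAt_const _ _) fun r hr heq => ?_
  have he : exp (-(ρ * r)) * exp (ρ * r) = 1 := by rw [← exp_add]; simp
  simp only [Pi.mul_apply] at heq
  have hpos : 0 < w r x := pos_of_mul_pos_right (heq.symm ▸ half_pos hM) (exp_pos _).le
  have hΓ := gammaOp_le_of_ae_le hγ hx hpos.le (by positivity) (hwM r (Ico_subset_Icc_self hr))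
  have hw' := (hder r hr).2 hpos
  have hγinf := hγ.bound_nonneg hx
  have key : exp (-(ρ * r)) * w' r x ≤ d * γinf * M + K * (M / 2) :=
    calc exp (-(ρ * r)) * w' r x
        ≤ exp (-(ρ * r)) * (d * (γinf * (exp (ρ * r) * M)) + K * w r x) :=
          mul_le_mul_of_nonneg_left (hw'.trans (by gcongr)) (exp_pos _).le
      _ = d * γinf * M * (exp (-(ρ * r)) * exp (ρ * r)) + K * (exp (-(ρ * r)) * w r x) := by ring
      _ = d * γinf * M + K * (M / 2) := by rw [he, heq]; ring
  have hsplit : exp (-(ρ * r)) * (w' r x - ρ * w r x) = exp (-(ρ * r)) * w' r x - ρ * (M / 2) := by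
    rw [← heq]; ring
  rw [hsplit]
  nlinarith [mul_le_mul_of_nonneg_right hρ hM.le, mul_nonneg (mul_nonneg hd hγinf) hM.le]

theorem IsSubsolution.ae_nonpos (hw : IsSubsolution Ω γ d K T w w') (hγ : KernelCondN Ω γ γinf)
    (hd : 0 ≤ d) (hK : 0 ≤ K) (h0 : ∀ᵐ x ∂(volume.restrict Ω), w 0 x ≤ 0) {B : ℝ}
    (hB : ∀ᵐ x ∂(volume.restrict Ω), ∀ t ∈ Icc 0 T, w t x ≤ B) :
    ∀ᵐ x ∂(volume.restrict Ω), ∀ t ∈ Icc 0 T, w t x ≤ 0 := by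
  set ρ := K + 2 * (d * γinf) + 1
  have hbase : ∀ᵐ x ∂(volume.restrict Ω), ∀ t ∈ Icc 0 T, exp (-(ρ * t)) * w t x ≤ max B 1 := by
    filter_upwards [hw, hB] with x ⟨hx, _⟩ hxB t ht
    have hρ : 0 ≤ ρ := by have := hγ.bound_nonneg hx; positivity
    have he : exp (-(ρ * t)) ≤ 1 := exp_le_one_iff.2 (by nlinarith [ht.1])
    rcases le_or_gt (w t x) 0 with h | h
    · exact (mul_nonpos_of_nonneg_of_nonpos (exp_pos _).le h).trans (by positivity)
    · calc exp (-(ρ * t)) * w t x ≤ w t x := mul_le_of_le_one_left h.le he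
        _ ≤ max B 1 := (hxB t ht).trans (le_max_left _ _)
  have hhalf : ∀ k : ℕ, ∀ᵐ x ∂(volume.restrict Ω), ∀ t ∈ Icc 0 T,
      exp (-(ρ * t)) * w t x ≤ max B 1 / 2 ^ k := by
    intro k
    induction k with
    | zero => simpa using hbase
    | succ k ih =>
      simpa [pow_succ, div_div] using hw.ae_le_half hγ hd le_rfl h0 (by positivity) ih
  filter_upwards [ae_all_iff.2 hhalf] with x hx t ht
  have hlim : Tendsto (fun k : ℕ => max B 1 / 2 ^ k) atTop (nhds 0) :=
    tendsto_const_nhds.div_atTop (tendsto_pow_atTop_atTop_of_one_lt one_lt_two)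
  have := ge_of_tendsto' hlim fun k => hx k t ht
  exact nonpos_of_mul_nonpos_right this (exp_pos _)

end MaximumPrinciple

namespace IsGSSol

variable {n : ℕ} {Ω : Set (EuclideanSpace ℝ (Fin n))} {d₁ d₂ f κ γinf δ c : ℝ}
  {γ₁ γ₂ : EuclideanSpace ℝ (Fin n) → EuclideanSpace ℝ (Fin n) → ℝ}
  {u0 v0 : EuclideanSpace ℝ (Fin n) → ℝ} {u v : ℝ → EuclideanSpace ℝ (Fin n) → ℝ}
  {x : EuclideanSpace ℝ (Fin n)}

lemma hasDerivWithinAt_fst (hsol : IsGSSol Ω d₁ d₂ f κ γ₁ γ₂ u0 v0 u v) (hx : x ∈ Ω) {t : ℝ}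
    (ht : 0 ≤ t) : HasDerivWithinAt (fun s => u s x)
      (d₁ * GammaOp Ω γ₁ (u t) x - u t x * (v t x) ^ 2 + f * (1 - u t x)) (Ici t) t :=
  (hsol.2.2 x hx t ht).1.mono (Ici_subset_Ici.2 ht)

lemma hasDerivWithinAt_snd (hsol : IsGSSol Ω d₁ d₂ f κ γ₁ γ₂ u0 v0 u v) (hx : x ∈ Ω) {t : ℝ}
    (ht : 0 ≤ t) : HasDerivWithinAt (fun s => v s x)
      (d₂ * GammaOp Ω γ₂ (v t) x + u t x * (v t x) ^ 2 - (f + κ) * v t x) (Ici t) t :=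
  (hsol.2.2 x hx t ht).2.mono (Ici_subset_Ici.2 ht)

lemma continuousOn_fst (hsol : IsGSSol Ω d₁ d₂ f κ γ₁ γ₂ u0 v0 u v) (hx : x ∈ Ω) :
    ContinuousOn (fun s => u s x) (Ici 0) :=
  fun t ht => (hsol.2.2 x hx t ht).1.continuousWithinAt

lemma continuousOn_snd (hsol : IsGSSol Ω d₁ d₂ f κ γ₁ γ₂ u0 v0 u v) (hx : x ∈ Ω) :
    ContinuousOn (fun s => v s x) (Ici 0) :=
  fun t ht => (hsol.2.2 x hx t ht).2.continuousWithinAt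

lemma ae_forall_fst_nonneg (hsol : IsGSSol Ω d₁ d₂ f κ γ₁ γ₂ u0 v0 u v) (hΩ : MeasurableSet Ω)
    (hu : NonnegSol Ω u) : ∀ᵐ x ∂(volume.restrict Ω), ∀ t, 0 ≤ t → 0 ≤ u t x :=
  ae_forall_nonneg_of_continuousOn
    ((ae_restrict_mem hΩ).mono fun _ hx => hsol.continuousOn_fst hx) hu

lemma ae_forall_snd_nonneg (hsol : IsGSSol Ω d₁ d₂ f κ γ₁ γ₂ u0 v0 u v) (hΩ : MeasurableSet Ω)
    (hv : NonnegSol Ω v) : ∀ᵐ x ∂(volume.restrict Ω), ∀ t, 0 ≤ t → 0 ≤ v t x :=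
  ae_forall_nonneg_of_continuousOn
    ((ae_restrict_mem hΩ).mono fun _ hx => hsol.continuousOn_snd hx) hv

/-- `v' ≥ -(d₂ γ∞ + f + κ) v`, so `v` on `[0, T]` is controlled by `v T`. -/
lemma exists_ae_snd_le (hsol : IsGSSol Ω d₁ d₂ f κ γ₁ γ₂ u0 v0 u v) (hγ₂ : KernelCondN Ω γ₂ γinf)
    (hd₂ : 0 ≤ d₂) (hΩ : MeasurableSet Ω) (hu : ∀ᵐ x ∂(volume.restrict Ω), ∀ t, 0 ≤ t → 0 ≤ u t x)
    (hv : ∀ᵐ x ∂(volume.restrict Ω), ∀ t, 0 ≤ t → 0 ≤ v t x) {T : ℝ} (hT : 0 ≤ T) :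
    ∃ V, ∀ᵐ x ∂(volume.restrict Ω), ∀ t ∈ Icc 0 T, v t x ≤ V := by
  refine exists_ae_le_of_deriv_right_ge (C := d₂ * γinf + (f + κ))
    (w' := fun t x => d₂ * GammaOp Ω γ₂ (v t) x + u t x * (v t x) ^ 2 - (f + κ) * v t x)
    ((ae_abs_le_supN (hsol.1 T hT).2).mono fun x hx => (le_abs_self _).trans hx) ?_
  filter_upwards [ae_restrict_mem hΩ, hu, hv] with x hx hux hvx
  refine ⟨(hsol.continuousOn_snd hx).mono Icc_subset_Ici_self,
    fun r hr => ⟨hsol.hasDerivWithinAt_snd hx hr.1, ?_⟩⟩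
  have hΓ := neg_mul_le_gammaOp hγ₂ hx (hvx r hr.1) (hv.mono fun y hy => hy r hr.1)
  nlinarith [mul_le_mul_of_nonneg_left hΓ hd₂, mul_nonneg (hux r hr.1) (sq_nonneg (v r x))]

/-- `u' ≥ -(d₁ γ∞ + V² + f) u` while `0 ≤ v ≤ V`, so `u` on `[0, T]` is controlled by `u T`. -/
lemma exists_ae_fst_le (hsol : IsGSSol Ω d₁ d₂ f κ γ₁ γ₂ u0 v0 u v) (hγ₁ : KernelCondN Ω γ₁ γinf)
    (hd₁ : 0 ≤ d₁) (hf : 0 ≤ f) (hΩ : MeasurableSet Ω)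
    (hu : ∀ᵐ x ∂(volume.restrict Ω), ∀ t, 0 ≤ t → 0 ≤ u t x)
    (hv : ∀ᵐ x ∂(volume.restrict Ω), ∀ t, 0 ≤ t → 0 ≤ v t x) {T V : ℝ} (hT : 0 ≤ T)
    (hV : ∀ᵐ x ∂(volume.restrict Ω), ∀ t ∈ Icc 0 T, v t x ≤ V) :
    ∃ U, ∀ᵐ x ∂(volume.restrict Ω), ∀ t ∈ Icc 0 T, u t x ≤ U := by
  refine exists_ae_le_of_deriv_right_ge (C := d₁ * γinf + V ^ 2 + f)
    (w' := fun t x => d₁ * GammaOp Ω γ₁ (u t) x - u t x * (v t x) ^ 2 + f * (1 - u t x))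
    ((ae_abs_le_supN (hsol.1 T hT).1).mono fun x hx => (le_abs_self _).trans hx) ?_
  filter_upwards [ae_restrict_mem hΩ, hu, hv, hV] with x hx hux hvx hVx
  refine ⟨(hsol.continuousOn_fst hx).mono Icc_subset_Ici_self,
    fun r hr => ⟨hsol.hasDerivWithinAt_fst hx hr.1, ?_⟩⟩
  have hΓ := neg_mul_le_gammaOp hγ₁ hx (hux r hr.1) (hu.mono fun y hy => hy r hr.1)
  have hv2 : v r x ^ 2 ≤ V ^ 2 := pow_le_pow_left₀ (hvx r hr.1) (hVx r (Ico_subset_Icc_self hr)) 2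
  nlinarith [mul_le_mul_of_nonneg_left hΓ hd₁, mul_le_mul_of_nonneg_left hv2 (hux r hr.1)]

/-- `u - 1 - δ e^{-ct}` is a subsolution: where it is positive, the reaction term is at most
`-f (u - 1 - δ e^{-ct}) - (f - c) δ e^{-ct} ≤ 0`. -/
lemma ae_fst_le_one_add (hsol : IsGSSol Ω d₁ d₂ f κ γ₁ γ₂ u0 v0 u v) (hγ₁ : KernelCondN Ω γ₁ γinf)
    (hd₁ : 0 ≤ d₁) (hf : 0 ≤ f) (hΩ : MeasurableSet Ω) (hu0 : MemLp u0 ⊤ (volume.restrict Ω))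
    (hδ : 0 ≤ δ) (hu0δ : supN Ω u0 ≤ 1 + δ) (hcf : c ≤ f)
    (hU : ∀ T, 0 ≤ T → ∃ U, ∀ᵐ x ∂(volume.restrict Ω), ∀ t ∈ Icc 0 T, u t x ≤ U) :
    ∀ᵐ x ∂(volume.restrict Ω), ∀ t, 0 ≤ t → u t x ≤ 1 + δ * exp (-(c * t)) := by
  refine ae_forall_of_forall_Icc fun T hT => ?_
  obtain ⟨U, hU⟩ := hU T hT
  have hw : IsSubsolution Ω γ₁ d₁ 0 T (fun t x => u t x - (1 + δ * exp (-(c * t))))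
      (fun t x => d₁ * GammaOp Ω γ₁ (u t) x - u t x * (v t x) ^ 2 + f * (1 - u t x)
        + δ * (c * exp (-(c * t)))) := by
    filter_upwards [ae_restrict_mem hΩ] with x hx
    refine ⟨hx, ((hsol.continuousOn_fst hx).mono Icc_subset_Ici_self).sub (by fun_prop),
      fun r hr => ⟨?_, fun hpos => ?_⟩⟩
    · exact ((hsol.hasDerivWithinAt_fst hx hr.1).sub
        (((hasDerivAt_exp_neg_mul c r).const_mul δ).const_add 1).hasDerivWithinAt).congr_deriv
        (by ring)
    · rw [gammaOp_sub_const]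
      have he := exp_pos (-(c * r))
      have hur : 0 ≤ u r x := by nlinarith
      nlinarith [mul_nonneg hur (sq_nonneg (v r x)),
        mul_nonneg (mul_nonneg (sub_nonneg.2 hcf) hδ) he.le]
  have h0 : ∀ᵐ x ∂(volume.restrict Ω), u 0 x - (1 + δ * exp (-(c * 0))) ≤ 0 := by
    filter_upwards [ae_restrict_mem hΩ, ae_abs_le_supN hu0] with x hx hx0
    rw [(hsol.2.1 x hx).1]
    simp only [mul_zero, neg_zero, exp_zero, mul_one]
    linarith [le_abs_self (u0 x)]
  have hB : ∀ᵐ x ∂(volume.restrict Ω), ∀ t ∈ Icc 0 T, u t x - (1 + δ * exp (-(c * t))) ≤ U := by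
    filter_upwards [hU] with x hx t ht
    nlinarith [hx t ht, mul_nonneg hδ (exp_pos (-(c * t))).le]
  filter_upwards [hw.ae_nonpos hγ₁ hd₁ le_rfl h0 hB] with x hx t ht
  linarith [hx t ht]

/-- `v - V₀ e^{-ct}` is a subsolution with `K = (1 + δ) V`: where it is positive,
`u v² - (f + κ) v ≤ (1 + δ) V (v - V₀ e^{-ct}) + ((1 + δ) V₀ - f - κ) v` and
`(1 + δ) V₀ - f - κ ≤ -c`. -/
lemma ae_snd_le_mul_exp (hsol : IsGSSol Ω d₁ d₂ f κ γ₁ γ₂ u0 v0 u v) (hγ₂ : KernelCondN Ω γ₂ γinf)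
    (hd₂ : 0 ≤ d₂) (hΩ : MeasurableSet Ω) (hv0 : MemLp v0 ⊤ (volume.restrict Ω)) (hδ : 0 ≤ δ)
    (hc : 0 ≤ c) (hcV₀ : c ≤ f + κ - (1 + δ) * supN Ω v0)
    (hu : ∀ᵐ x ∂(volume.restrict Ω), ∀ t, 0 ≤ t → u t x ≤ 1 + δ)
    (hv : ∀ᵐ x ∂(volume.restrict Ω), ∀ t, 0 ≤ t → 0 ≤ v t x)
    (hV : ∀ T, 0 ≤ T → ∃ V, ∀ᵐ x ∂(volume.restrict Ω), ∀ t ∈ Icc 0 T, v t x ≤ V) :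
    ∀ᵐ x ∂(volume.restrict Ω), ∀ t, 0 ≤ t → v t x ≤ supN Ω v0 * exp (-(c * t)) := by
  set V₀ := supN Ω v0
  have hV₀ : 0 ≤ V₀ := supN_nonneg v0
  refine ae_forall_of_forall_Icc fun T hT => ?_
  obtain ⟨V, hV⟩ := hV T hT
  have hw : IsSubsolution Ω γ₂ d₂ ((1 + δ) * max V 0) T
      (fun t x => v t x - V₀ * exp (-(c * t)))
      (fun t x => d₂ * GammaOp Ω γ₂ (v t) x + u t x * (v t x) ^ 2 - (f + κ) * v t x
        + V₀ * (c * exp (-(c * t)))) := by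
    filter_upwards [ae_restrict_mem hΩ, hu, hv, hV] with x hx hux hvx hVx
    refine ⟨hx, ((hsol.continuousOn_snd hx).mono Icc_subset_Ici_self).sub (by fun_prop),
      fun r hr => ⟨?_, fun hpos => ?_⟩⟩
    · exact ((hsol.hasDerivWithinAt_snd hx hr.1).sub
        ((hasDerivAt_exp_neg_mul c r).const_mul V₀).hasDerivWithinAt).congr_deriv (by ring)
    · rw [gammaOp_sub_const]
      have hb : V₀ * exp (-(c * r)) ≤ V₀ :=
        mul_le_of_le_one_right hV₀ (exp_le_one_iff.2 (by nlinarith [hr.1]))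
      have hvV : v r x ≤ max V 0 := (hVx r (Ico_subset_Icc_self hr)).trans (le_max_left _ _)
      have h1 : u r x * v r x ^ 2 ≤ (1 + δ) * v r x ^ 2 :=
        mul_le_mul_of_nonneg_right (hux r hr.1) (sq_nonneg _)
      have h2 : (1 + δ) * v r x * (v r x - V₀ * exp (-(c * r)))
          ≤ (1 + δ) * max V 0 * (v r x - V₀ * exp (-(c * r))) := by
        gcongr
      have h3 : v r x * ((1 + δ) * V₀ - (f + κ) + c) ≤ 0 :=
        mul_nonpos_of_nonneg_of_nonpos (hvx r hr.1) (by linarith)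
      nlinarith [mul_le_mul_of_nonneg_left hb (mul_nonneg (by linarith : (0 : ℝ) ≤ 1 + δ)
        (hvx r hr.1)), mul_nonneg hc hpos.le]
  have h0 : ∀ᵐ x ∂(volume.restrict Ω), v 0 x - V₀ * exp (-(c * 0)) ≤ 0 := by
    filter_upwards [ae_restrict_mem hΩ, ae_abs_le_supN hv0] with x hx hx0
    rw [(hsol.2.1 x hx).2]
    simp only [mul_zero, neg_zero, exp_zero, mul_one]
    linarith [le_abs_self (v0 x)]
  have hB : ∀ᵐ x ∂(volume.restrict Ω), ∀ t ∈ Icc 0 T, v t x - V₀ * exp (-(c * t)) ≤ V := by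
    filter_upwards [hV] with x hx t ht
    nlinarith [hx t ht, mul_nonneg hV₀ (exp_pos (-(c * t))).le]
  filter_upwards [hw.ae_nonpos hγ₂ hd₂ (by positivity) h0 hB] with x hx t ht
  linarith [hx t ht]

/-- `1 - M e^{-ct} - u` is a subsolution: where it is positive, its reaction term is at most
`u v² - (f - c) M e^{-ct} ≤ ((1 + δ) a² - (f - c) M) e^{-ct} ≤ 0`. -/
lemma ae_one_sub_le_fst (hsol : IsGSSol Ω d₁ d₂ f κ γ₁ γ₂ u0 v0 u v)
    (hγ₁ : KernelCondN Ω γ₁ γinf) (hd₁ : 0 ≤ d₁) (hf : 0 ≤ f) (hΩ : MeasurableSet Ω)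
    (hδ : 0 ≤ δ) (hc : 0 ≤ c) {a M : ℝ} (hM : 1 ≤ M) (haM : (1 + δ) * a ^ 2 ≤ (f - c) * M)
    (hu : ∀ᵐ x ∂(volume.restrict Ω), ∀ t, 0 ≤ t → 0 ≤ u t x ∧ u t x ≤ 1 + δ)
    (hv : ∀ᵐ x ∂(volume.restrict Ω), ∀ t, 0 ≤ t → 0 ≤ v t x ∧ v t x ≤ a * exp (-(c * t))) :
    ∀ᵐ x ∂(volume.restrict Ω), ∀ t, 0 ≤ t → 1 - M * exp (-(c * t)) ≤ u t x := by
  refine ae_forall_of_forall_Icc fun T hT => ?_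
  have hw : IsSubsolution Ω γ₁ d₁ 0 T (fun t x => 1 - M * exp (-(c * t)) - u t x)
      (fun t x => M * (c * exp (-(c * t)))
        - (d₁ * GammaOp Ω γ₁ (u t) x - u t x * (v t x) ^ 2 + f * (1 - u t x))) := by
    filter_upwards [ae_restrict_mem hΩ, hu, hv] with x hx hux hvx
    refine ⟨hx, (Continuous.continuousOn (by fun_prop)).sub
      ((hsol.continuousOn_fst hx).mono Icc_subset_Ici_self), fun r hr => ⟨?_, fun hpos => ?_⟩⟩
    · exact ((((hasDerivAt_exp_neg_mul c r).const_mul M).const_sub 1).hasDerivWithinAt.sub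
        (hsol.hasDerivWithinAt_fst hx hr.1)).congr_deriv (by ring)
    · rw [gammaOp_const_sub]
      have he := exp_pos (-(c * r))
      have he1 : exp (-(c * r)) ≤ 1 := exp_le_one_iff.2 (by nlinarith [hr.1])
      have hv2 : v r x ^ 2 ≤ a ^ 2 * exp (-(c * r)) := by
        calc v r x ^ 2 ≤ (a * exp (-(c * r))) ^ 2 :=
              pow_le_pow_left₀ (hvx r hr.1).1 (hvx r hr.1).2 2
          _ = a ^ 2 * exp (-(c * r)) * exp (-(c * r)) := by ring
          _ ≤ a ^ 2 * exp (-(c * r)) := mul_le_of_le_one_right (by positivity) he1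
      have h1 : u r x * v r x ^ 2 ≤ (1 + δ) * (a ^ 2 * exp (-(c * r))) :=
        mul_le_mul (hux r hr.1).2 hv2 (sq_nonneg _) (by linarith)
      nlinarith [mul_le_mul_of_nonneg_right haM he.le, mul_nonneg hf hpos.le]
  have h0 : ∀ᵐ x ∂(volume.restrict Ω), 1 - M * exp (-(c * 0)) - u 0 x ≤ 0 := by
    filter_upwards [hu] with x hx
    simp only [mul_zero, neg_zero, exp_zero, mul_one]
    linarith [(hx 0 le_rfl).1]
  have hB : ∀ᵐ x ∂(volume.restrict Ω), ∀ t ∈ Icc 0 T, 1 - M * exp (-(c * t)) - u t x ≤ 1 := by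
    filter_upwards [hu] with x hx t ht
    nlinarith [(hx t ht.1).1, mul_nonneg (by linarith : (0 : ℝ) ≤ M) (exp_pos (-(c * t))).le]
  filter_upwards [hw.ae_nonpos hγ₁ hd₁ le_rfl h0 hB] with x hx t ht
  linarith [hx t ht]

lemma exists_ae_exp_decay (hsol : IsGSSol Ω d₁ d₂ f κ γ₁ γ₂ u0 v0 u v)
    (hγ₁ : KernelCondN Ω γ₁ γinf) (hγ₂ : KernelCondN Ω γ₂ γinf) (hd₁ : 0 ≤ d₁) (hd₂ : 0 ≤ d₂)
    (hf : 0 < f) (hΩ : MeasurableSet Ω) (hu0 : MemLp u0 ⊤ (volume.restrict Ω))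
    (hv0 : MemLp v0 ⊤ (volume.restrict Ω)) (hupos : NonnegSol Ω u) (hvpos : NonnegSol Ω v)
    (hδ : 0 ≤ δ) (hu0δ : supN Ω u0 ≤ 1 + δ) (hv0δ : (1 + δ) * supN Ω v0 < f + κ) :
    ∃ c > 0, ∃ M ≥ 0, ∀ᵐ x ∂(volume.restrict Ω), ∀ t, 0 ≤ t →
      1 - M * exp (-(c * t)) ≤ u t x ∧ u t x ≤ 1 + δ * exp (-(c * t)) ∧
        v t x ≤ supN Ω v0 * exp (-(c * t)) := by
  set c := min (f + κ - (1 + δ) * supN Ω v0) (f / 2)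
  have hc : 0 < c := lt_min (by linarith) (by linarith)
  have hcf : c < f := (min_le_right _ _).trans_lt (by linarith)
  set M := 1 + (1 + δ) * supN Ω v0 ^ 2 / (f - c)
  have hM : 1 ≤ M := le_add_of_nonneg_right (div_nonneg (by positivity) (by linarith))
  have hV₀M : (1 + δ) * supN Ω v0 ^ 2 ≤ (f - c) * M := by
    rw [mul_add, mul_div_cancel₀ _ (sub_ne_zero.2 hcf.ne')]; linarith
  have hu := hsol.ae_forall_fst_nonneg hΩ hupos
  have hv := hsol.ae_forall_snd_nonneg hΩ hvpos
  have hV (T : ℝ) (hT : 0 ≤ T) := hsol.exists_ae_snd_le hγ₂ hd₂ hΩ hu hv hT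
  have hu_le := hsol.ae_fst_le_one_add hγ₁ hd₁ hf.le hΩ hu0 hδ hu0δ hcf.le fun T hT =>
    (hV T hT).elim fun _ hV => hsol.exists_ae_fst_le hγ₁ hd₁ hf.le hΩ hu hv hT hV
  have hu_mem : ∀ᵐ x ∂(volume.restrict Ω), ∀ t, 0 ≤ t → 0 ≤ u t x ∧ u t x ≤ 1 + δ := by
    filter_upwards [hu, hu_le] with x hx0 hx1 t ht
    have : exp (-(c * t)) ≤ 1 := exp_le_one_iff.2 (by nlinarith)
    exact ⟨hx0 t ht, (hx1 t ht).trans (by nlinarith)⟩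
  have hv_le := hsol.ae_snd_le_mul_exp hγ₂ hd₂ hΩ hv0 hδ hc.le (min_le_left _ _)
    (hu_mem.mono fun _ hx t ht => (hx t ht).2) hv hV
  have hu_ge := hsol.ae_one_sub_le_fst hγ₁ hd₁ hf.le hΩ hδ hc.le hM hV₀M hu_mem
    (by filter_upwards [hv, hv_le] with x h0 h1 t ht using ⟨h0 t ht, h1 t ht⟩)
  refine ⟨c, hc, M, by linarith, ?_⟩
  filter_upwards [hu_le, hv_le, hu_ge] with x h1 h2 h3 t ht
  exact ⟨h3 t ht, h1 t ht, h2 t ht⟩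

end IsGSSol

lemma tendsto_mul_exp_neg_mul_atTop {c : ℝ} (hc : 0 < c) (a : ℝ) :
    Tendsto (fun t => a * exp (-(c * t))) atTop (nhds 0) := by
  simpa using (tendsto_exp_neg_atTop_nhds_zero.comp (tendsto_id.const_mul_atTop hc)).const_mul a

theorem statement6_general
    (n : ℕ)
    (Ω : Set (EuclideanSpace ℝ (Fin n)))
    (hΩopen : IsOpen Ω)
    (d₁ d₂ f κ : ℝ) (hd₁ : 0 < d₁) (hd₂ : 0 < d₂) (hf : 0 < f)
    (γ₁ γ₂ : EuclideanSpace ℝ (Fin n) → EuclideanSpace ℝ (Fin n) → ℝ)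
    (γinf : ℝ)
    (hγ₁ : KernelCondN Ω γ₁ γinf) (hγ₂ : KernelCondN Ω γ₂ γinf)
    (u0 v0 : EuclideanSpace ℝ (Fin n) → ℝ)
    (hu0 : MemLp u0 ⊤ (volume.restrict Ω)) (hv0 : MemLp v0 ⊤ (volume.restrict Ω))
    (u v : ℝ → EuclideanSpace ℝ (Fin n) → ℝ)
    (hsol : IsGSSol Ω d₁ d₂ f κ γ₁ γ₂ u0 v0 u v)
    (hupos : NonnegSol Ω u) (hvpos : NonnegSol Ω v)
    (δ : ℝ) (hδ : 0 ≤ δ)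
    (hu0small : supN Ω u0 ≤ 1 + δ) (hv0small : supN Ω v0 < (f + κ) / (1 + δ)) :
    (∀ t, 0 ≤ t → supN Ω (u t) ≤ 1 + δ ∧ supN Ω (v t) ≤ supN Ω v0) ∧
    Filter.Tendsto (fun t => supN Ω (fun y => u t y - 1) + supN Ω (v t))
      Filter.atTop (nhds 0) := by
  have hv0δ : (1 + δ) * supN Ω v0 < f + κ := by
    rwa [lt_div_iff₀ (by linarith), mul_comm] at hv0small
  obtain ⟨c, hc, M, hM, henv⟩ := hsol.exists_ae_exp_decay hγ₁ hγ₂ hd₁.le hd₂.le hf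
    hΩopen.measurableSet hu0 hv0 hupos hvpos hδ hu0small hv0δ
  have hexp (t : ℝ) (ht : 0 ≤ t) : exp (-(c * t)) ≤ 1 := exp_le_one_iff.2 (by nlinarith)
  refine ⟨fun t ht => ⟨supN_le_of_ae_abs_le (by linarith) ?_,
    supN_le_of_ae_abs_le (supN_nonneg v0) ?_⟩, ?_⟩
  · filter_upwards [henv, hupos t ht] with x hx hx0
    rw [abs_of_nonneg hx0]
    nlinarith [(hx t ht).2.1, hexp t ht]
  · filter_upwards [henv, hvpos t ht] with x hx hx0
    rw [abs_of_nonneg hx0]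
    nlinarith [(hx t ht).2.2, hexp t ht, supN_nonneg (Ω := Ω) v0]
  · have hu_lim : Tendsto (fun t => supN Ω (fun y => u t y - 1)) atTop (nhds 0) := by
      refine tendsto_supN_of_ae_abs_le (tendsto_mul_exp_neg_mul_atTop hc (δ + M))
        (fun t ht => ?_) fun t _ => by positivity
      filter_upwards [henv] with x hx
      have := exp_pos (-(c * t))
      rw [abs_le]
      constructor <;> nlinarith [(hx t ht).1, (hx t ht).2.1]
    have hv_lim : Tendsto (fun t => supN Ω (v t)) atTop (nhds 0) := by
      refine tendsto_supN_of_ae_abs_le (tendsto_mul_exp_neg_mul_atTop hc (supN Ω v0))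
        (fun t ht => ?_) fun t _ => mul_nonneg (supN_nonneg v0) (exp_pos _).le
      filter_upwards [henv, hvpos t ht] with x hx hx0
      rw [abs_of_nonneg hx0]
      exact (hx t ht).2.2
    simpa using hu_lim.add hv_lim

/-- Theorem 1.2, stabilization: under the smallness condition (1.10) on
the initial data, the solution stays in the corresponding invariant region and converges
to the semi-trivial steady state `(1,0)` in `X²`. -/
theorem statement6
    (n : ℕ) (hn : 1 ≤ n)
    (Ω : Set (EuclideanSpace ℝ (Fin n)))
    (hΩopen : IsOpen Ω) (hΩconn : IsConnected Ω) (hΩbdd : Bornology.IsBounded Ω)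
    (d₁ d₂ f κ : ℝ) (hd₁ : 0 < d₁) (hd₂ : 0 < d₂) (hf : 0 < f) (hκ : 0 < κ)
    (γ₁ γ₂ : EuclideanSpace ℝ (Fin n) → EuclideanSpace ℝ (Fin n) → ℝ)
    (γinf : ℝ) (hγinf : 1 ≤ γinf)
    (hγ₁ : KernelCondN Ω γ₁ γinf) (hγ₂ : KernelCondN Ω γ₂ γinf)
    (u0 v0 : EuclideanSpace ℝ (Fin n) → ℝ)
    (hu0 : MemLp u0 ⊤ (volume.restrict Ω)) (hv0 : MemLp v0 ⊤ (volume.restrict Ω))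
    (hu0pos : ∀ᵐ x ∂(volume.restrict Ω), 0 ≤ u0 x)
    (hv0pos : ∀ᵐ x ∂(volume.restrict Ω), 0 ≤ v0 x)
    (u v : ℝ → EuclideanSpace ℝ (Fin n) → ℝ)
    (hsol : IsGSSol Ω d₁ d₂ f κ γ₁ γ₂ u0 v0 u v)
    (hupos : NonnegSol Ω u) (hvpos : NonnegSol Ω v)
    (δ : ℝ) (hδ : 0 ≤ δ)
    (hu0small : supN Ω u0 ≤ 1 + δ) (hv0small : supN Ω v0 < (f + κ) / (1 + δ)) :
    (∀ t, 0 ≤ t → supN Ω (u t) ≤ 1 + δ ∧ supN Ω (v t) ≤ supN Ω v0) ∧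
    Filter.Tendsto (fun t => supN Ω (fun y => u t y - 1) + supN Ω (v t))
      Filter.atTop (nhds 0) :=
  statement6_general n Ω hΩopen d₁ d₂ f κ hd₁ hd₂ hf γ₁ γ₂ γinf hγ₁ hγ₂ u0 v0 hu0 hv0 u v hsol hupos
    hvpos δ hδ hu0small hv0small
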